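/- Let X be a smooth normed space. Then Birkhoff–James orthogonality on X is right additive: if x ⊥ y and x ⊥ z then x ⊥ (y + z). -/

import Mathlib

open RCLike

/-- A support functional at `x`: a norm-one continuous linear functional with `φ x = ‖x‖`. -/
def SuppFunc (𝕜 : Type*) [RCLike 𝕜] {X : Type*} [NormedAddCommGroup X] [NormedSpace 𝕜 X]
    (x : X) (φ : X →L[𝕜] 𝕜) : Prop :=
  ‖φ‖ = 1 ∧ φ x = (‖x‖ : 𝕜)

/-- `X` is smooth at `x` if there is a unique support functional at `x`. -/
def NormSmoothAt (𝕜 : Type*) [RCLike 𝕜] {X : Type*} [NormedAddCommGroup X] [NormedSpace 𝕜 X]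
    (x : X) : Prop := ∃! φ : X →L[𝕜] 𝕜, SuppFunc 𝕜 x φ

/-- `X` is smooth if it is smooth at every nonzero point. -/
def NormSmooth (𝕜 : Type*) (X : Type*) [RCLike 𝕜] [NormedAddCommGroup X] [NormedSpace 𝕜 X] :
    Prop := ∀ x : X, x ≠ 0 → NormSmoothAt 𝕜 x

/-- `sip` is the canonical semi-inner product `[u,v] = ‖v‖ * φ_v u` built from support
functionals (on a smooth space this pins `sip` down uniquely). -/
def IsCompatSIP (𝕜 : Type*) {X : Type*} [RCLike 𝕜] [NormedAddCommGroup X] [NormedSpace 𝕜 X]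
    (sip : X → X → 𝕜) : Prop :=
  (∀ u : X, sip u 0 = 0) ∧
  ∀ (u v : X) (φ : X →L[𝕜] 𝕜), SuppFunc 𝕜 v φ → sip u v = (‖v‖ : 𝕜) * φ u

/-- Birkhoff–James orthogonality: `x ⊥ y` iff `‖x + a • y‖ ≥ ‖x‖` for all scalars. -/
def BJOrth (𝕜 : Type*) {X : Type*} [RCLike 𝕜] [NormedAddCommGroup X] [NormedSpace 𝕜 X]
    (x y : X) : Prop := ∀ a : 𝕜, ‖x‖ ≤ ‖x + a • y‖

/-- A semi-inner product compatible with the norm: additive and homogeneous in the first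
variable, conjugate-homogeneous in the second, positive definite, Cauchy–Schwarz, and
`[x,x] = ‖x‖²`. -/
def IsSIP (𝕜 : Type*) {X : Type*} [RCLike 𝕜] [NormedAddCommGroup X] [NormedSpace 𝕜 X]
    (sip : X → X → 𝕜) : Prop :=
  (∀ x y z : X, sip (x + y) z = sip x z + sip y z) ∧
  (∀ (a : 𝕜) (x y : X), sip (a • x) y = a * sip x y) ∧
  (∀ (a : 𝕜) (x y : X), sip x (a • y) = (starRingEnd 𝕜) a * sip x y) ∧
  (∀ x : X, x ≠ 0 → 0 < re (sip x x) ∧ im (sip x x) = 0) ∧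
  (∀ x y : X, ‖sip x y‖ ≤ Real.sqrt (re (sip x x)) * Real.sqrt (re (sip y y))) ∧
  (∀ x : X, sip x x = (‖x‖ : 𝕜) ^ 2)

/-!
If `x ⊥ y`, the class of `x` in `X ⧸ span {y}` still has norm `‖x‖`, so Hahn–Banach in the
quotient yields a support functional at `x` vanishing at `y`; conversely any such functional
witnesses `x ⊥ y`. In a smooth space the support functional `φ` at `x ≠ 0` is unique, so the
vectors orthogonal to `x` form the kernel of `φ`, which is closed under addition.
-/

section

variable {𝕜 : Type*} [RCLike 𝕜] {X : Type*} [NormedAddCommGroup X] [NormedSpace 𝕜 X]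

theorem suppFunc_of_norm_le_one {x : X} (hx : x ≠ 0) {φ : X →L[𝕜] 𝕜} (hφ : ‖φ‖ ≤ 1)
    (hφx : φ x = (‖x‖ : 𝕜)) : SuppFunc 𝕜 x φ := by
  refine ⟨le_antisymm hφ ?_, hφx⟩
  have hle : ‖x‖ ≤ ‖φ‖ * ‖x‖ := by simpa [hφx] using φ.le_opNorm x
  exact one_le_of_le_mul_right₀ (norm_pos_iff.mpr hx) hle

theorem SuppFunc.bjOrth {x y : X} {φ : X →L[𝕜] 𝕜} (hφ : SuppFunc 𝕜 x φ) (hy : φ y = 0) :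
    BJOrth 𝕜 x y := fun a =>
  calc ‖x‖ = ‖φ (x + a • y)‖ := by simp [hy, hφ.2]
    _ ≤ ‖φ‖ * ‖x + a • y‖ := φ.le_opNorm _
    _ = ‖x + a • y‖ := by rw [hφ.1, one_mul]

theorem BJOrth.norm_mk_span_singleton {x y : X} (h : BJOrth 𝕜 x y) :
    ‖(Submodule.Quotient.mk x : X ⧸ 𝕜 ∙ y)‖ = ‖x‖ := by
  refine le_antisymm (Submodule.Quotient.norm_mk_le _ x) ?_
  change ‖x‖ ≤ ‖(x : X ⧸ (𝕜 ∙ y).toAddSubgroup)‖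
  rw [QuotientAddGroup.norm_mk, Metric.le_infDist ⟨0, zero_mem _⟩]
  intro s hs
  obtain ⟨a, rfl⟩ := Submodule.mem_span_singleton.mp hs
  simpa [dist_eq_norm, sub_eq_add_neg, ← neg_smul] using h (-a)

theorem BJOrth.exists_suppFunc {x y : X} (hx : x ≠ 0) (h : BJOrth 𝕜 x y) :
    ∃ φ : X →L[𝕜] 𝕜, SuppFunc 𝕜 x φ ∧ φ y = 0 := by
  set q := (𝕜 ∙ y).mkQL
  obtain ⟨g, hg, hgx⟩ := exists_dual_vector'' 𝕜 (q x)
  refine ⟨g ∘L q, suppFunc_of_norm_le_one hx ?_ ?_, ?_⟩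
  · refine (g ∘L q).opNorm_le_bound zero_le_one fun m => ?_
    calc ‖g (q m)‖ ≤ ‖g‖ * ‖q m‖ := g.le_opNorm _
      _ ≤ 1 * ‖m‖ := mul_le_mul hg (Submodule.Quotient.norm_mk_le _ m) (norm_nonneg _) zero_le_one
  · exact hgx.trans (congrArg _ h.norm_mk_span_singleton)
  · simp [q, (Submodule.Quotient.mk_eq_zero _).mpr (Submodule.mem_span_singleton_self y)]

theorem bjOrth_iff_suppFunc_apply_eq_zero {x y : X} (hx : x ≠ 0) (hsm : NormSmoothAt 𝕜 x)
    {φ : X →L[𝕜] 𝕜} (hφ : SuppFunc 𝕜 x φ) : BJOrth 𝕜 x y ↔ φ y = 0 := by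
  refine ⟨fun h => ?_, hφ.bjOrth⟩
  obtain ⟨ψ, hψ, hψy⟩ := h.exists_suppFunc hx
  rwa [hsm.unique hφ hψ]

end

theorem stmt3 {𝕜 : Type*} [RCLike 𝕜] {X : Type*} [NormedAddCommGroup X] [NormedSpace 𝕜 X]
    (hsm : NormSmooth 𝕜 X) (x y z : X)
    (hxy : BJOrth 𝕜 x y) (hxz : BJOrth 𝕜 x z) :
    BJOrth 𝕜 x (y + z) := by
  rcases eq_or_ne x 0 with rfl | hx
  · exact fun a => by simp
  obtain ⟨φ, hφ, -⟩ := hsm x hx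
  have horth (v : X) : BJOrth 𝕜 x v ↔ φ v = 0 :=
    bjOrth_iff_suppFunc_apply_eq_zero hx (hsm x hx) hφ
  rw [horth, map_add, (horth y).mp hxy, (horth z).mp hxz, add_zero]
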